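/- Let S be a completely 0-simple topological inverse semigroup, so S is (algebraically) isomorphic to a Brandt λ-extension B_λ(G) of a maximal subgroup G. Then every non-zero H-class of S is a clopen subset of S, and is homeomorphic to the topological group G. -/

import Mathlib

/-!
For `α γ β δ` the map `x ↦ (γ,1,α) x (β,1,δ)` sends `(α,g,β)` to `(γ,g,δ)` and every other
element to `0`. By continuity of multiplication these maps restrict to mutually inverse
homeomorphisms between any two non-zero `H`-classes, and `(α₀,G,α₀)` is a copy of `G` by
hypothesis. For `γ = α`, `δ = β` the class `(α,G,β)` is the preimage of `S ∖ {0}`, hence open,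
and also the set of fixed points `x` of this map with `x x⁻¹ = (α,1,α)`, hence closed since `S`
is Hausdorff and inversion is continuous.
-/
/-- Multiplication of the Brandt `λ`-extension `B_λ(G) = (I × G × I) ∪ {0}`, with
`none` playing the role of the zero. -/
def brandtMul {I G : Type*} [Mul G] [DecidableEq I] :
    Option (I × G × I) → Option (I × G × I) → Option (I × G × I)
  | some (a, g, b), some (c, h, d) => if b = c then some (a, g * h, d) else none
  | _, _ => none

/-- Inversion of the Brandt `λ`-extension: `(α,g,β)⁻¹ = (β,g⁻¹,α)` and `0⁻¹ = 0`. -/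
def brandtInv {I G : Type*} [Inv G] : Option (I × G × I) → Option (I × G × I)
  | some (a, g, b) => some (b, g⁻¹, a)
  | none => none

/-- The non-zero `H`-class `(α, G, β)` of `B_λ(G)`. -/
def Hcl {I : Type*} (G : Type*) (α β : I) : Set (Option (I × G × I)) :=
  {x | ∃ g : G, x = some (α, g, β)}

open Set

namespace Brandt

variable {I G : Type*}

theorem range_some_eq_Hcl (α β : I) :
    range (fun g : G => (some (α, g, β) : Option (I × G × I))) = Hcl G α β := by
  ext x
  simp only [mem_range, Hcl, mem_ofPred_eq, eq_comm]

theorem some_mem_Hcl_iff {α β γ δ : I} {g : G} :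
    some (γ, g, δ) ∈ Hcl G α β ↔ γ = α ∧ δ = β := by
  simp [Hcl, and_comm]

theorem none_notMem_Hcl (α β : I) : (none : Option (I × G × I)) ∉ Hcl G α β := by
  simp [Hcl]

variable [Group G] [DecidableEq I]

def sandwich (γ α β δ : I) (x : Option (I × G × I)) : Option (I × G × I) :=
  brandtMul (brandtMul (some (γ, 1, α)) x) (some (β, 1, δ))

theorem sandwich_some (γ α β δ α' β' : I) (g : G) :
    sandwich γ α β δ (some (α', g, β')) =
      if α' = α ∧ β' = β then some (γ, g, δ) else none := by
  unfold sandwich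
  split_ifs with h
  · obtain ⟨rfl, rfl⟩ := h
    simp [brandtMul]
  · by_cases hα : α' = α
    · subst hα
      have hβ : β' ≠ β := fun hβ => h ⟨rfl, hβ⟩
      simp [brandtMul, hβ]
    · simp [brandtMul, Ne.symm hα]

theorem sandwich_eq_none_iff {γ α β δ : I} {x : Option (I × G × I)} :
    sandwich γ α β δ x = none ↔ x ∉ Hcl G α β := by
  rcases x with _ | ⟨α', g, β'⟩
  · simp [sandwich, brandtMul, none_notMem_Hcl]
  · rw [sandwich_some, some_mem_Hcl_iff]
    split_ifs <;> simp_all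

theorem mapsTo_sandwich (γ α β δ : I) :
    MapsTo (sandwich γ α β δ) (Hcl G α β) (Hcl G γ δ) := by
  rintro _ ⟨g, rfl⟩
  simp [sandwich_some, Hcl]

theorem sandwich_sandwich {γ α β δ : I} {x : Option (I × G × I)} (hx : x ∈ Hcl G α β) :
    sandwich α γ δ β (sandwich γ α β δ x) = x := by
  obtain ⟨g, rfl⟩ := hx
  simp [sandwich_some]

theorem Hcl_eq_preimage_ne_none (α β : I) :
    Hcl G α β = sandwich α α β β ⁻¹' {none}ᶜ := by
  ext x
  simp [sandwich_eq_none_iff]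

theorem Hcl_eq_fixedPoints_inter (α β : I) :
    Hcl G α β = {x | sandwich α α β β x = x} ∩
      (fun x => brandtMul x (brandtInv x)) ⁻¹' {some (α, 1, α)} := by
  ext x
  rcases x with _ | ⟨α', g, β'⟩
  · simp [sandwich, brandtMul, none_notMem_Hcl]
  · by_cases hα : α' = α <;> by_cases hβ : β' = β <;>
      simp [Hcl, sandwich_some, brandtMul, brandtInv, hα, hβ]

variable [TopologicalSpace (Option (I × G × I))]
  (hmul : Continuous fun p : Option (I × G × I) × Option (I × G × I) => brandtMul p.1 p.2)
include hmul

theorem continuous_sandwich (γ α β δ : I) : Continuous (sandwich (G := G) γ α β δ) :=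
  hmul.comp ((hmul.comp (continuous_const.prodMk continuous_id)).prodMk continuous_const)

theorem isOpen_Hcl [T1Space (Option (I × G × I))] (α β : I) : IsOpen (Hcl G α β) := by
  rw [Hcl_eq_preimage_ne_none]
  exact isOpen_compl_singleton.preimage (continuous_sandwich hmul α α β β)

theorem isClosed_Hcl [T2Space (Option (I × G × I))]
    (hinv : Continuous (brandtInv (I := I) (G := G))) (α β : I) : IsClosed (Hcl G α β) := by
  rw [Hcl_eq_fixedPoints_inter]
  exact (isClosed_eq (continuous_sandwich hmul α α β β) continuous_id).inter
    (isClosed_singleton.preimage (hmul.comp (continuous_id.prodMk hinv)))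

def hclHomeomorph (α β γ δ : I) : Hcl G α β ≃ₜ Hcl G γ δ where
  toFun := (mapsTo_sandwich γ α β δ).restrict
  invFun := (mapsTo_sandwich α γ δ β).restrict
  left_inv x := Subtype.ext (sandwich_sandwich x.2)
  right_inv x := Subtype.ext (sandwich_sandwich x.2)
  continuous_toFun := (continuous_sandwich hmul γ α β δ).restrict _
  continuous_invFun := (continuous_sandwich hmul α γ δ β).restrict _

end Brandt

open Brandt in
theorem stmt_6_general {I G : Type*} [Group G] [DecidableEq I] [TopologicalSpace G]
    [TopologicalSpace (Option (I × G × I))]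
    [T2Space (Option (I × G × I))]
    (hmul : Continuous fun p : Option (I × G × I) × Option (I × G × I) =>
      brandtMul p.1 p.2)
    (hinv : Continuous (brandtInv (I := I) (G := G)))
    (hmax : ∃ α₀ : I,
      Topology.IsEmbedding fun g : G => (some (α₀, g, α₀) : Option (I × G × I))) :
    ∀ α β : I, IsClopen (Hcl G α β) ∧ Nonempty (↥(Hcl G α β) ≃ₜ G) := by
  obtain ⟨α₀, hemb⟩ := hmax
  intro α β
  refine ⟨⟨isClosed_Hcl hmul hinv α β, isOpen_Hcl hmul α β⟩, ⟨?_⟩⟩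
  exact (hclHomeomorph hmul α β α₀ α₀).trans
    ((Homeomorph.setCongr (range_some_eq_Hcl α₀ α₀)).symm.trans hemb.toHomeomorph.symm)

/-- Let `S` be a completely `0`-simple topological inverse semigroup, so
that (up to isomorphism) `S = B_λ(G)` is a Brandt `λ`-extension of a maximal subgroup
`G` (the topology of the topological group `G` being the subspace topology of a
maximal subgroup).  Then every non-zero `H`-class `(α,G,β)` of `S` is clopen in `S`
and homeomorphic to the topological group `G`. -/
theorem stmt_6 {I G : Type*} [Group G] [DecidableEq I] [TopologicalSpace G]
    [IsTopologicalGroup G] [TopologicalSpace (Option (I × G × I))]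
    [T2Space (Option (I × G × I))]
    (hmul : Continuous fun p : Option (I × G × I) × Option (I × G × I) =>
      brandtMul p.1 p.2)
    (hinv : Continuous (brandtInv (I := I) (G := G)))
    (hmax : ∃ α₀ : I,
      Topology.IsEmbedding fun g : G => (some (α₀, g, α₀) : Option (I × G × I))) :
    ∀ α β : I, IsClopen (Hcl G α β) ∧ Nonempty (↥(Hcl G α β) ≃ₜ G) :=
  stmt_6_general hmul hinv hmax
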